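/- Let (X,d,m) be a metric measure space with (X,d) proper, geodesic and non-branching, with m(B) > 0 for every nonempty open ball B (i.e. supp m = X). Let Ω ⊆ X be open with ∂Ω ≠ ∅, let ε > 0, and assume m(Ω ∖ T_δ^{nb}) = 0 for the signed distance δ. If ∂Ω satisfies the measured interior geodesic condition of size ε (mIGC_ε), then the foot-point projection restricted to O_ε ∩ {0 < δ < ε} is surjective onto ∂Ω: for every z ∈ ∂Ω there exists x ∈ O_ε ∩ {x : 0 < δ(x) < ε} ∩ T_δ^{nb} with d(x,z) = δ(x). -/

import Mathlib

open Metric Set Filter MeasureTheory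

variable {X : Type*}

/-- A geodesic parameterized on `[0,1]`. -/
def IsGeodesic [MetricSpace X] (γ : ℝ → X) : Prop :=
  ∀ s ∈ Set.Icc (0:ℝ) 1, ∀ t ∈ Set.Icc (0:ℝ) 1,
    dist (γ s) (γ t) = |s - t| * dist (γ 0) (γ 1)

/-- Every pair of points is joined by a geodesic. -/
def GeodesicSpace' (X : Type*) [MetricSpace X] : Prop :=
  ∀ x y : X, ∃ γ : ℝ → X, IsGeodesic γ ∧ γ 0 = x ∧ γ 1 = y

/-- Non-branching: two geodesics agreeing on `[0,t]`, `t ∈ (0,1)`, agree on `[0,1]`. -/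
def NonBranching (X : Type*) [MetricSpace X] : Prop :=
  ∀ γ₁ γ₂ : ℝ → X, IsGeodesic γ₁ → IsGeodesic γ₂ →
    ∀ t ∈ Set.Ioo (0:ℝ) 1, (∀ s ∈ Set.Icc (0:ℝ) t, γ₁ s = γ₂ s) →
      ∀ s ∈ Set.Icc (0:ℝ) 1, γ₁ s = γ₂ s

open scoped Classical in
/-- Signed distance from the boundary of `Ω`. -/
noncomputable def signedDistFr [MetricSpace X] (Ω : Set X) (x : X) : ℝ :=
  if x ∈ Ω then Metric.infDist x (frontier Ω) else -Metric.infDist x (frontier Ω)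
/-- The set `Γ_u`. -/
def Gamma [MetricSpace X] (u : X → ℝ) : Set (X × X) :=
  {p | u p.1 - u p.2 = dist p.1 p.2}

/-- The transport relation `R_u = Γ_u ∪ Γ_u⁻¹`. -/
def Ru [MetricSpace X] (u : X → ℝ) : Set (X × X) :=
  Gamma u ∪ {p | (p.2, p.1) ∈ Gamma u}

/-- The transport set `T_u`. -/
def Tu [MetricSpace X] (u : X → ℝ) : Set X :=
  {x | ∃ y, y ≠ x ∧ (x, y) ∈ Ru u}

/-- The forward branching set `A⁺`. -/
def Aplus [MetricSpace X] (u : X → ℝ) : Set X :=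
  {x ∈ Tu u | ∃ y z, (x, y) ∈ Gamma u ∧ (x, z) ∈ Gamma u ∧ (y, z) ∉ Ru u}

/-- The backward branching set `A⁻`. -/
def Aminus [MetricSpace X] (u : X → ℝ) : Set X :=
  {x ∈ Tu u | ∃ y z, (y, x) ∈ Gamma u ∧ (z, x) ∈ Gamma u ∧ (y, z) ∉ Ru u}

/-- The non-branched transport set `T_u^{nb}`. -/
def Tnb [MetricSpace X] (u : X → ℝ) : Set X :=
  Tu u \ (Aplus u ∪ Aminus u)
/-- The set `O_ε` of points covered by geodesics of length `≥ ε` minimizing the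
distance from `∂Ω`. -/
def Oeps [MetricSpace X] (Ω : Set X) (ε : ℝ) : Set X :=
  {x | x ∈ Ω ∧ ∃ γ : ℝ → X, IsGeodesic γ ∧ (∃ t ∈ Set.Icc (0:ℝ) 1, γ t = x) ∧
    γ 0 ∈ frontier Ω ∧ signedDistFr Ω (γ 1) = dist (γ 0) (γ 1) ∧ ε ≤ dist (γ 0) (γ 1)}

/-- The measured interior geodesic condition of size `ε`. -/
def mIGC [MetricSpace X] [MeasurableSpace X] (μ : Measure X) (Ω : Set X) (ε : ℝ) : Prop :=
  μ ({x | 0 < signedDistFr Ω x ∧ signedDistFr Ω x < ε} \ Oeps Ω ε) = 0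

open scoped Topology

section A
variable [MetricSpace X]

lemma IsGeodesic.continuousOn {γ : ℝ → X} (h : IsGeodesic γ) :
    ContinuousOn γ (Set.Icc 0 1) := by
  have : LipschitzOnWith (Real.toNNReal (dist (γ 0) (γ 1))) γ (Set.Icc 0 1) := by
    apply LipschitzOnWith.of_dist_le_mul
    intro s hs t ht
    rw [h s hs t ht, Real.coe_toNNReal _ dist_nonneg, Real.dist_eq, mul_comm]
  exact this.continuousOn

lemma exists_frontier_between {Ω : Set X} {γ : ℝ → X} (hγ : IsGeodesic γ)
    (ha : γ 0 ∈ Ω) (hb : γ 1 ∉ Ω) :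
    ∃ w ∈ frontier Ω, dist (γ 0) w + dist w (γ 1) = dist (γ 0) (γ 1) := by
  set Z : Set ℝ := Set.Icc 0 1 ∩ γ ⁻¹' (closure Ωᶜ) with hZ
  have hZsub : Z ⊆ Set.Icc 0 1 := Set.inter_subset_left
  have hZclosed : IsClosed Z :=
    hγ.continuousOn.preimage_isClosed_of_isClosed isClosed_Icc isClosed_closure
  have hZcomp : IsCompact Z := isCompact_Icc.of_isClosed_subset hZclosed hZsub
  have hZne : Z.Nonempty := ⟨1, ⟨zero_le_one, le_refl 1⟩, subset_closure hb⟩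
  set t₀ := sInf Z with ht₀def
  have ht₀Z : t₀ ∈ Z := hZcomp.sInf_mem hZne
  have ht₀Icc : t₀ ∈ Set.Icc (0:ℝ) 1 := hZsub ht₀Z
  have hcl : γ t₀ ∈ closure Ω := by
    rcases eq_or_lt_of_le ht₀Icc.1 with h0 | h0
    · rw [← h0]; exact subset_closure ha
    · -- all t < t₀ have γ t ∈ Ω
      have hmem : ∀ t ∈ Set.Ico (0:ℝ) t₀, γ t ∈ Ω := by
        intro t ht
        by_contra hno
        have : t ∈ Z := ⟨⟨ht.1, ht.2.le.trans ht₀Icc.2⟩, subset_closure hno⟩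
        exact absurd (csInf_le hZcomp.bddBelow this) (not_le.2 ht.2)
      have hne : (𝓝[Set.Ico (0:ℝ) t₀] t₀).NeBot := by
        apply mem_closure_iff_nhdsWithin_neBot.mp
        rw [closure_Ico (ne_of_lt h0)]
        exact ⟨h0.le, le_refl _⟩
      have htend : Tendsto γ (𝓝[Set.Ico (0:ℝ) t₀] t₀) (𝓝 (γ t₀)) :=
        (hγ.continuousOn t₀ ht₀Icc).mono_left
          (nhdsWithin_mono _ (fun t ht => ⟨ht.1, ht.2.le.trans ht₀Icc.2⟩))
      exact mem_closure_of_tendsto htend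
        (eventually_nhdsWithin_of_forall (fun t ht => hmem t ht))
  refine ⟨γ t₀, ?_, ?_⟩
  · rw [frontier_eq_closure_inter_closure]
    exact ⟨hcl, ht₀Z.2⟩
  · have h1 := hγ 0 ⟨le_refl 0, zero_le_one⟩ t₀ ht₀Icc
    have h2 := hγ t₀ ht₀Icc 1 ⟨zero_le_one, le_refl 1⟩
    rw [h1, h2]
    have e1 : |0 - t₀| = t₀ := by rw [abs_sub_comm, sub_zero, abs_of_nonneg ht₀Icc.1]
    have e2 : |t₀ - 1| = 1 - t₀ := by rw [abs_sub_comm, abs_of_nonneg (by linarith [ht₀Icc.2])]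
    rw [e1, e2]; ring

lemma exists_frontier_dist (hgeo : GeodesicSpace' X) {Ω : Set X} {a b : X}
    (ha : a ∈ Ω) (hb : b ∉ Ω) :
    ∃ w ∈ frontier Ω, dist a w + dist w b = dist a b := by
  obtain ⟨γ, hγ, h0, h1⟩ := hgeo a b
  obtain ⟨w, hw, hd⟩ := exists_frontier_between hγ (h0 ▸ ha) (h1 ▸ hb)
  exact ⟨w, hw, by rwa [h0, h1] at hd⟩

lemma signedDistFr_of_mem {Ω : Set X} {x : X} (h : x ∈ Ω) :
    signedDistFr Ω x = infDist x (frontier Ω) := if_pos h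

lemma signedDistFr_of_not_mem {Ω : Set X} {x : X} (h : x ∉ Ω) :
    signedDistFr Ω x = -infDist x (frontier Ω) := if_neg h

lemma signedDistFr_frontier {Ω : Set X} {z : X} (h : z ∈ frontier Ω) :
    signedDistFr Ω z = 0 := by
  unfold signedDistFr
  split_ifs <;> simp [infDist_zero_of_mem h]

lemma signedDistFr_le_dist {Ω : Set X} {x w : X} (hw : w ∈ frontier Ω) :
    signedDistFr Ω x ≤ dist x w := by
  unfold signedDistFr
  split_ifs
  · exact infDist_le_dist_of_mem hw
  · exact le_trans (neg_nonpos.2 infDist_nonneg) dist_nonneg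

lemma signedDistFr_pos_of_mem {Ω : Set X} (hΩ : IsOpen Ω) (hfr : (frontier Ω).Nonempty)
    {x : X} (h : x ∈ Ω) : 0 < signedDistFr Ω x := by
  rw [signedDistFr_of_mem h]
  exact (isClosed_frontier.notMem_iff_infDist_pos hfr).mp
    (fun hf => hf.2 (by rwa [hΩ.interior_eq]))

lemma mem_of_signedDistFr_pos {Ω : Set X} {x : X} (h : 0 < signedDistFr Ω x) : x ∈ Ω := by
  by_contra hx
  rw [signedDistFr_of_not_mem hx] at h
  linarith [infDist_nonneg (x := x) (s := frontier Ω)]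

lemma signedDistFr_lipschitz (hgeo : GeodesicSpace' X) {Ω : Set X} (a b : X) :
    signedDistFr Ω a ≤ signedDistFr Ω b + dist a b := by
  by_cases ha : a ∈ Ω <;> by_cases hb : b ∈ Ω
  · rw [signedDistFr_of_mem ha, signedDistFr_of_mem hb]
    exact infDist_le_infDist_add_dist
  · rw [signedDistFr_of_mem ha, signedDistFr_of_not_mem hb]
    obtain ⟨w, hw, hd⟩ := exists_frontier_dist hgeo ha hb
    have h1 : infDist a (frontier Ω) ≤ dist a w := infDist_le_dist_of_mem hw
    have h2 : infDist b (frontier Ω) ≤ dist w b := by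
      rw [dist_comm]; exact infDist_le_dist_of_mem hw
    linarith
  · rw [signedDistFr_of_not_mem ha, signedDistFr_of_mem hb]
    have := infDist_nonneg (x := a) (s := frontier Ω)
    have := infDist_nonneg (x := b) (s := frontier Ω)
    have := dist_nonneg (x := a) (y := b)
    linarith
  · rw [signedDistFr_of_not_mem ha, signedDistFr_of_not_mem hb]
    have := infDist_le_infDist_add_dist (x := b) (y := a) (s := frontier Ω)
    rw [dist_comm] at this
    linarith

end A

section B
variable [MetricSpace X]

lemma ray_lemma (hgeo : GeodesicSpace' X) {Ω : Set X} (hΩ : IsOpen Ω) {γ : ℝ → X}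
    (hγ : IsGeodesic γ) (h0 : γ 0 ∈ frontier Ω)
    (h1 : signedDistFr Ω (γ 1) = dist (γ 0) (γ 1)) (hpos : 0 < dist (γ 0) (γ 1))
    {t : ℝ} (ht : t ∈ Set.Ioc (0:ℝ) 1) :
    γ t ∈ Ω ∧ signedDistFr Ω (γ t) = t * dist (γ 0) (γ 1) := by
  set ℓ := dist (γ 0) (γ 1) with hℓ
  have h1Ω : γ 1 ∈ Ω := mem_of_signedDistFr_pos (h1 ▸ hpos)
  have hinf1 : infDist (γ 1) (frontier Ω) = ℓ := by
    rw [← signedDistFr_of_mem h1Ω]; exact h1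
  have htIcc : t ∈ Set.Icc (0:ℝ) 1 := ⟨ht.1.le, ht.2⟩
  have hdist1t : dist (γ 1) (γ t) = (1 - t) * ℓ := by
    rw [hγ 1 ⟨zero_le_one, le_refl 1⟩ t htIcc, abs_of_nonneg (by linarith [ht.2])]
  have hdist0t : dist (γ 0) (γ t) = t * ℓ := by
    rw [hγ 0 ⟨le_refl 0, zero_le_one⟩ t htIcc, abs_sub_comm, sub_zero,
      abs_of_nonneg ht.1.le]
  have htΩ : γ t ∈ Ω := by
    by_contra hno
    obtain ⟨w, hw, hd⟩ := exists_frontier_dist hgeo h1Ω hno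
    have h2 : ℓ ≤ dist (γ 1) w := by
      rw [← hinf1]; exact infDist_le_dist_of_mem hw
    have h3 : dist (γ 1) w ≤ (1 - t) * ℓ := by
      rw [← hdist1t, ← hd]; linarith [dist_nonneg (x := w) (y := γ t)]
    nlinarith [ht.1, hpos]
  refine ⟨htΩ, ?_⟩
  rw [signedDistFr_of_mem htΩ]
  have hup : infDist (γ t) (frontier Ω) ≤ t * ℓ := by
    rw [← hdist0t, dist_comm (γ 0) (γ t)]
    exact infDist_le_dist_of_mem h0
  have hlow : t * ℓ ≤ infDist (γ t) (frontier Ω) := by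
    have := infDist_le_infDist_add_dist (x := γ 1) (y := γ t) (s := frontier Ω)
    rw [hinf1, dist_comm (γ 1) (γ t)] at this
    rw [dist_comm] at hdist1t
    rw [hdist1t] at this
    linarith
  linarith

lemma IsGeodesic.scale {γ : ℝ → X} (h : IsGeodesic γ) {c : ℝ} (hc : c ∈ Set.Icc (0:ℝ) 1) :
    IsGeodesic (fun s => γ (s * c)) := by
  intro s hs t ht
  have hsc : s * c ∈ Set.Icc (0:ℝ) 1 :=
    ⟨mul_nonneg hs.1 hc.1, mul_le_one₀ hs.2 hc.1 hc.2⟩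
  have htc : t * c ∈ Set.Icc (0:ℝ) 1 :=
    ⟨mul_nonneg ht.1 hc.1, mul_le_one₀ ht.2 hc.1 hc.2⟩
  simp only
  rw [h (s * c) hsc (t * c) htc]
  rw [zero_mul, one_mul, h 0 ⟨le_refl 0, zero_le_one⟩ c hc]
  have e1 : |0 - c| = c := by rw [abs_sub_comm, sub_zero, abs_of_nonneg hc.1]
  have e2 : |s * c - t * c| = |s - t| * c := by
    rw [← sub_mul, abs_mul, abs_of_nonneg hc.1]
  rw [e1, e2]; ring
end B

section C
variable [MetricSpace X]

lemma concat_geodesic {α β : ℝ → X} (hα : IsGeodesic α) (hβ : IsGeodesic β)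
    (hj : α 1 = β 0) (ha : 0 < dist (α 0) (α 1)) (hb : 0 < dist (β 0) (β 1))
    (hadd : dist (α 0) (β 1) = dist (α 0) (α 1) + dist (β 0) (β 1)) :
    ∃ γ : ℝ → X, IsGeodesic γ ∧ γ 0 = α 0 ∧ γ 1 = β 1 ∧
      ∀ s ∈ Set.Icc (0:ℝ) (dist (α 0) (α 1) / dist (α 0) (β 1)),
        γ s = α (s * dist (α 0) (β 1) / dist (α 0) (α 1)) := by
  classical
  set a := dist (α 0) (α 1) with hadef
  set b := dist (β 0) (β 1) with hbdef
  set ℓ := dist (α 0) (β 1) with hldef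
  have hℓ : ℓ = a + b := hadd
  have hℓpos : 0 < ℓ := by rw [hℓ]; linarith
  set T := a / ℓ with hTdef
  have hT0 : 0 < T := div_pos ha hℓpos
  have hT1 : T < 1 := by rw [hTdef, div_lt_one hℓpos]; linarith
  have haT : a = T * ℓ := by rw [hTdef]; field_simp
  have hbT : b = (1 - T) * ℓ := by
    rw [hTdef]; field_simp; linarith
  have h1Tne : (1:ℝ) - T ≠ 0 := by linarith
  have hTne : T ≠ 0 := ne_of_gt hT0
  have hℓne : ℓ ≠ 0 := ne_of_gt hℓpos
  set γ : ℝ → X := fun s => if s ≤ T then α (s / T) else β ((s - T) / (1 - T)) with hγdef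
  have hγ0 : γ 0 = α 0 := by
    simp only [hγdef, if_pos hT0.le, zero_div]
  have hγ1 : γ 1 = β 1 := by
    simp only [hγdef, if_neg (not_le.2 hT1)]
    rw [div_self (by linarith : (1:ℝ) - T ≠ 0)]
  have hmem1 : ∀ s : ℝ, 0 ≤ s → s ≤ T → s / T ∈ Set.Icc (0:ℝ) 1 :=
    fun s h1 h2 => ⟨div_nonneg h1 hT0.le, (div_le_one hT0).2 h2⟩
  have hmem2 : ∀ s : ℝ, T ≤ s → s ≤ 1 → (s - T) / (1 - T) ∈ Set.Icc (0:ℝ) 1 :=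
    fun s h1 h2 => ⟨div_nonneg (by linarith) (by linarith),
      (div_le_one (by linarith)).2 (by linarith)⟩
  have key : ∀ s ∈ Set.Icc (0:ℝ) 1, ∀ t ∈ Set.Icc (0:ℝ) 1, s ≤ t →
      dist (γ s) (γ t) = (t - s) * ℓ := by
    intro s hs t ht hst
    by_cases h2 : t ≤ T
    · have h1 : s ≤ T := le_trans hst h2
      have e1 : γ s = α (s / T) := if_pos h1
      have e2 : γ t = α (t / T) := if_pos h2
      rw [e1, e2, hα (s / T) (hmem1 s hs.1 h1) (t / T) (hmem1 t ht.1 h2), ← hadef]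
      rw [div_sub_div_same, abs_div, abs_of_pos hT0, abs_sub_comm,
        abs_of_nonneg (by linarith : (0:ℝ) ≤ t - s), haT]
      field_simp
    · by_cases h1 : s ≤ T
      · -- mixed case
        have e1 : γ s = α (s / T) := if_pos h1
        have e2 : γ t = β ((t - T) / (1 - T)) := if_neg h2
        set u := (t - T) / (1 - T) with hu
        have humem : u ∈ Set.Icc (0:ℝ) 1 := hmem2 t (le_of_not_ge h2) ht.2
        have hsmem : s / T ∈ Set.Icc (0:ℝ) 1 := hmem1 s hs.1 h1
        have d1 : dist (α (s / T)) (α 1) = (T - s) * ℓ := by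
          rw [hα (s / T) hsmem 1 ⟨zero_le_one, le_refl 1⟩, ← hadef, haT,
            abs_sub_comm, abs_of_nonneg (by nlinarith [hsmem.2] : (0:ℝ) ≤ 1 - s / T)]
          field_simp
        have d2 : dist (β 0) (β u) = (t - T) * ℓ := by
          rw [hβ 0 ⟨le_refl 0, zero_le_one⟩ u humem, ← hbdef, hbT,
            abs_sub_comm, sub_zero, abs_of_nonneg humem.1, hu]
          field_simp
        have d3 : dist (α 0) (α (s / T)) = s * ℓ := by
          rw [hα 0 ⟨le_refl 0, zero_le_one⟩ (s / T) hsmem, ← hadef, haT,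
            abs_sub_comm, sub_zero, abs_of_nonneg hsmem.1]
          field_simp
        have d4 : dist (β u) (β 1) = (1 - t) * ℓ := by
          rw [hβ u humem 1 ⟨zero_le_one, le_refl 1⟩, ← hbdef, hbT,
            abs_sub_comm, abs_of_nonneg (by linarith [humem.2] : (0:ℝ) ≤ 1 - u), hu]
          field_simp
          ring
        have hup : dist (γ s) (γ t) ≤ (t - s) * ℓ := by
          calc dist (γ s) (γ t) ≤ dist (γ s) (α 1) + dist (α 1) (γ t) := dist_triangle _ _ _
          _ = (T - s) * ℓ + (t - T) * ℓ := by rw [e1, e2, d1, hj, d2]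
          _ = (t - s) * ℓ := by ring
        have hlow : ℓ ≤ s * ℓ + dist (γ s) (γ t) + (1 - t) * ℓ := by
          calc ℓ = dist (α 0) (β 1) := hldef
          _ ≤ dist (α 0) (γ s) + dist (γ s) (β 1) := dist_triangle _ _ _
          _ ≤ dist (α 0) (γ s) + (dist (γ s) (γ t) + dist (γ t) (β 1)) :=
              add_le_add le_rfl (dist_triangle _ _ _)
          _ = s * ℓ + (dist (γ s) (γ t) + (1 - t) * ℓ) := by rw [e1, d3, e2, d4]
          _ = s * ℓ + dist (γ s) (γ t) + (1 - t) * ℓ := by ring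
        linarith
      · -- both in second segment
        have h1' : T ≤ s := le_of_not_ge h1
        have e1 : γ s = β ((s - T) / (1 - T)) := if_neg h1
        have e2 : γ t = β ((t - T) / (1 - T)) := if_neg h2
        rw [e1, e2, hβ _ (hmem2 s h1' hs.2) _ (hmem2 t (le_of_not_ge h2) ht.2), ← hbdef]
        rw [div_sub_div_same, abs_div, abs_of_pos (by linarith : (0:ℝ) < 1 - T),
          show s - T - (t - T) = s - t by ring, abs_sub_comm,
          abs_of_nonneg (by linarith : (0:ℝ) ≤ t - s), hbT]
        field_simp
  have hgeod : IsGeodesic γ := by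
    intro s hs t ht
    have hd : dist (γ 0) (γ 1) = ℓ := by rw [hγ0, hγ1]
    rcases le_total s t with h | h
    · rw [key s hs t ht h, hd, abs_sub_comm, abs_of_nonneg (by linarith : (0:ℝ) ≤ t - s)]
    · rw [dist_comm, key t ht s hs h, hd, abs_of_nonneg (by linarith : (0:ℝ) ≤ s - t)]
  refine ⟨γ, hgeod, hγ0, hγ1, ?_⟩
  intro s hs
  have h1 : s ≤ T := by rw [hTdef]; exact hs.2
  have : γ s = α (s / T) := if_pos h1
  rw [this, hTdef]
  congr 1
  rw [div_div_eq_mul_div]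

end C

section D
variable [MetricSpace X]

lemma betw_lemma (hgeo : GeodesicSpace' X) (hnb : NonBranching X) {p x y₁ y₂ : X}
    (hpx : 0 < dist p x) (hb1 : 0 < dist x y₁) (h12 : dist x y₁ ≤ dist x y₂)
    (h1 : dist p y₁ = dist p x + dist x y₁) (h2 : dist p y₂ = dist p x + dist x y₂) :
    dist y₁ y₂ = dist x y₂ - dist x y₁ := by
  obtain ⟨α, hα, hα0, hα1⟩ := hgeo p x
  obtain ⟨β₁, hβ₁, hβ₁0, hβ₁1⟩ := hgeo x y₁
  obtain ⟨β₂, hβ₂, hβ₂0, hβ₂1⟩ := hgeo x y₂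
  set a := dist p x with hadef
  set b₁ := dist x y₁ with hb₁def
  set b₂ := dist x y₂ with hb₂def
  have hb2 : 0 < b₂ := lt_of_lt_of_le hb1 h12
  set ℓ₁ := a + b₁ with hℓ₁def
  set ℓ₂ := a + b₂ with hℓ₂def
  have hℓ₁pos : 0 < ℓ₁ := by positivity
  have hℓ₂pos : 0 < ℓ₂ := by positivity
  have hle : ℓ₁ ≤ ℓ₂ := by rw [hℓ₁def, hℓ₂def]; linarith
  -- first concatenation
  have haa : dist (α 0) (α 1) = a := by rw [hα0, hα1]
  have hj1 : α 1 = β₁ 0 := by rw [hα1, hβ₁0]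
  have hj2 : α 1 = β₂ 0 := by rw [hα1, hβ₂0]
  have hbb1 : dist (β₁ 0) (β₁ 1) = b₁ := by rw [hβ₁0, hβ₁1]
  have hbb2 : dist (β₂ 0) (β₂ 1) = b₂ := by rw [hβ₂0, hβ₂1]
  have hd1 : dist (α 0) (β₁ 1) = ℓ₁ := by rw [hα0, hβ₁1]; exact h1
  have hd2 : dist (α 0) (β₂ 1) = ℓ₂ := by rw [hα0, hβ₂1]; exact h2
  obtain ⟨γ₁, hγ₁, hγ₁0, hγ₁1, hfor₁⟩ := concat_geodesic hα hβ₁ hj1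
    (haa ▸ hpx) (hbb1 ▸ hb1) (by rw [haa, hbb1, hd1])
  obtain ⟨γ₂, hγ₂, hγ₂0, hγ₂1, hfor₂⟩ := concat_geodesic hα hβ₂ hj2
    (haa ▸ hpx) (hbb2 ▸ hb2) (by rw [haa, hbb2, hd2])
  rw [haa, hd1] at hfor₁
  rw [haa, hd2] at hfor₂
  -- rescaled second geodesic
  have hc : ℓ₁ / ℓ₂ ∈ Set.Icc (0:ℝ) 1 :=
    ⟨le_of_lt (div_pos hℓ₁pos hℓ₂pos), (div_le_one hℓ₂pos).2 hle⟩
  set η : ℝ → X := fun s => γ₂ (s * (ℓ₁ / ℓ₂)) with hηdef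
  have hη : IsGeodesic η := hγ₂.scale hc
  -- agreement on [0, a/ℓ₁]
  have hagree : ∀ s ∈ Set.Icc (0:ℝ) (a / ℓ₁), γ₁ s = η s := by
    intro s hs
    have e1 : γ₁ s = α (s * ℓ₁ / a) := hfor₁ s hs
    have hs2 : s * (ℓ₁ / ℓ₂) ∈ Set.Icc (0:ℝ) (a / ℓ₂) := by
      constructor
      · exact mul_nonneg hs.1 (div_nonneg hℓ₁pos.le hℓ₂pos.le)
      · calc s * (ℓ₁ / ℓ₂) ≤ (a / ℓ₁) * (ℓ₁ / ℓ₂) := by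
              apply mul_le_mul_of_nonneg_right hs.2 (div_nonneg hℓ₁pos.le hℓ₂pos.le)
        _ = a / ℓ₂ := by field_simp
    have e2 : η s = α ((s * (ℓ₁ / ℓ₂)) * ℓ₂ / a) := hfor₂ _ hs2
    rw [e1, e2]
    congr 1
    field_simp
  -- non-branching
  have hT : a / ℓ₁ ∈ Set.Ioo (0:ℝ) 1 := by
    constructor
    · exact div_pos hpx hℓ₁pos
    · rw [div_lt_one hℓ₁pos]; rw [hℓ₁def]; linarith
  have hall := hnb γ₁ η hγ₁ hη (a / ℓ₁) hT hagree
  have hend : γ₁ 1 = η 1 := hall 1 ⟨zero_le_one, le_refl 1⟩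
  have hy₁ : y₁ = γ₂ (ℓ₁ / ℓ₂) := by
    rw [← hβ₁1, ← hγ₁1, hend, hηdef]
    simp only [one_mul]
  have hdγ₂ : dist (γ₂ 0) (γ₂ 1) = ℓ₂ := by rw [hγ₂0, hγ₂1]; exact hd2
  have := hγ₂ (ℓ₁ / ℓ₂) hc 1 ⟨zero_le_one, le_refl 1⟩
  rw [hdγ₂, hγ₂1] at this
  rw [hy₁, ← hβ₂1, this, abs_sub_comm, abs_of_nonneg (by
    rw [sub_nonneg, div_le_one hℓ₂pos]; exact hle)]
  field_simp
  rw [hℓ₁def, hℓ₂def]; ring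

end D

section E
variable [MetricSpace X] [MeasurableSpace X]

lemma exists_deep_point (μ : Measure X)
    (hsupp : ∀ (x : X) (r : ℝ), 0 < r → 0 < μ (Metric.ball x r))
    {Ω : Set X} (hΩ : IsOpen Ω) {ε : ℝ} (hε : 0 < ε)
    (hmigc : mIGC μ Ω ε) {z : X} (hz : z ∈ frontier Ω) {r : ℝ} (hr : 0 < r) :
    ∃ x ∈ Oeps Ω ε, 0 < signedDistFr Ω x ∧ signedDistFr Ω x < ε ∧ dist x z < min r ε := by
  set r' := min r ε with hr'def
  have hr' : 0 < r' := lt_min hr hε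
  have hzcl : z ∈ closure Ω := frontier_subset_closure hz
  obtain ⟨y, hyΩ, hyz⟩ := Metric.mem_closure_iff.1 hzcl (r' / 2) (by linarith)
  obtain ⟨ρ, hρ, hball⟩ := Metric.isOpen_iff.1 hΩ y hyΩ
  set ρ' := min ρ (r' / 2) with hρ'def
  have hρ'pos : 0 < ρ' := lt_min hρ (by linarith)
  have hsub : Metric.ball y ρ' ⊆ {x | 0 < signedDistFr Ω x ∧ signedDistFr Ω x < ε} := by
    intro w hw
    have hwΩ : w ∈ Ω := hball (Metric.ball_subset_ball (min_le_left _ _) hw)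
    have hwz : dist w z < r' := by
      have h1 : dist w y < r' / 2 := lt_of_lt_of_le hw (min_le_right _ _)
      have h2 : dist y z < r' / 2 := by rwa [dist_comm] at hyz
      calc dist w z ≤ dist w y + dist y z := dist_triangle _ _ _
      _ < r' := by linarith
    refine ⟨signedDistFr_pos_of_mem hΩ ⟨z, hz⟩ hwΩ, ?_⟩
    calc signedDistFr Ω w ≤ dist w z := signedDistFr_le_dist hz
    _ < r' := hwz
    _ ≤ ε := min_le_right _ _
  have hdistz : ∀ w ∈ Metric.ball y ρ', dist w z < r' := by
    intro w hw
    have h1 : dist w y < r' / 2 := lt_of_lt_of_le hw (min_le_right _ _)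
    have h2 : dist y z < r' / 2 := by rwa [dist_comm] at hyz
    calc dist w z ≤ dist w y + dist y z := dist_triangle _ _ _
    _ < r' := by linarith
  have hne : (Metric.ball y ρ' ∩ Oeps Ω ε).Nonempty := by
    by_contra hemp
    rw [Set.not_nonempty_iff_eq_empty] at hemp
    have hsub2 : Metric.ball y ρ' ⊆
        {x | 0 < signedDistFr Ω x ∧ signedDistFr Ω x < ε} \ Oeps Ω ε := by
      intro w hw
      refine ⟨hsub hw, fun hwo => ?_⟩
      exact Set.eq_empty_iff_forall_notMem.1 hemp w ⟨hw, hwo⟩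
    have := measure_mono (μ := μ) hsub2
    rw [hmigc] at this
    exact absurd (le_antisymm this zero_le) (ne_of_gt (hsupp y ρ' hρ'pos))
  obtain ⟨x, hxball, hxO⟩ := hne
  exact ⟨x, hxO, (hsub hxball).1, (hsub hxball).2, hdistz x hxball⟩

lemma exists_eps_point (μ : Measure X)
    (hsupp : ∀ (x : X) (r : ℝ), 0 < r → 0 < μ (Metric.ball x r))
    (hgeo : GeodesicSpace' X)
    {Ω : Set X} (hΩ : IsOpen Ω) {ε : ℝ} (hε : 0 < ε)
    (hmigc : mIGC μ Ω ε) {z : X} (hz : z ∈ frontier Ω) (n : ℕ) :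
    ∃ p : X, signedDistFr Ω p = ε ∧ |dist p z - ε| ≤ 2 / (n + 1) := by
  have hrpos : (0:ℝ) < 1 / (n + 1) := by positivity
  obtain ⟨x, hxO, hxpos, hxlt, hxz⟩ := exists_deep_point μ hsupp hΩ hε hmigc hz hrpos
  obtain ⟨hxΩ, γ, hγ, ⟨s, hsIcc, hγs⟩, hγ0, hγ1, hγε⟩ := hxO
  set ℓ := dist (γ 0) (γ 1) with hℓdef
  have hℓpos : 0 < ℓ := lt_of_lt_of_le hε hγε
  set t := ε / ℓ with htdef
  have ht : t ∈ Set.Ioc (0:ℝ) 1 := ⟨div_pos hε hℓpos, (div_le_one hℓpos).2 hγε⟩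
  obtain ⟨hpΩ, hpd⟩ := ray_lemma hgeo hΩ hγ hγ0 hγ1 hℓpos ht
  have hpval : signedDistFr Ω (γ t) = ε := by rw [hpd, htdef]; field_simp; rfl
  have hd0p : dist (γ 0) (γ t) = ε := by
    rw [hγ 0 ⟨le_refl 0, zero_le_one⟩ t ⟨ht.1.le, ht.2⟩, abs_sub_comm, sub_zero,
      abs_of_nonneg ht.1.le, htdef]
    field_simp
    rfl
  -- s > 0
  have hspos : 0 < s := by
    rcases lt_or_eq_of_le hsIcc.1 with h | h
    · exact h
    · exfalso
      have : signedDistFr Ω x = 0 := by rw [← hγs, ← h]; exact signedDistFr_frontier hγ0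
      linarith
  obtain ⟨-, hxd⟩ := ray_lemma hgeo hΩ hγ hγ0 hγ1 hℓpos ⟨hspos, hsIcc.2⟩
  have hd0x : dist (γ 0) x = signedDistFr Ω x := by
    rw [← hγs, hγ 0 ⟨le_refl 0, zero_le_one⟩ s hsIcc, abs_sub_comm, sub_zero,
      abs_of_nonneg hsIcc.1, ← hxd]
  have hxz' : dist x z < 1 / (n + 1) := lt_of_lt_of_le hxz (min_le_left _ _)
  have hsd : signedDistFr Ω x ≤ dist x z := signedDistFr_le_dist hz
  have hd0z : dist (γ 0) z < 2 / (n + 1) := by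
    calc dist (γ 0) z ≤ dist (γ 0) x + dist x z := dist_triangle _ _ _
    _ < 2 / (n + 1) := by
        rw [hd0x]
        have h1 : signedDistFr Ω x < 1 / (n + 1) := hsd.trans_lt hxz'
        have h2 : (2:ℝ) / (n + 1) = 1 / (n + 1) + 1 / (n + 1) := by ring
        linarith
  refine ⟨γ t, hpval, ?_⟩
  rw [abs_le]
  have htri1 : dist (γ 0) (γ t) ≤ dist (γ 0) z + dist z (γ t) := dist_triangle _ _ _
  have htri2 : dist (γ t) z ≤ dist (γ t) (γ 0) + dist (γ 0) z := dist_triangle _ _ _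
  rw [dist_comm (γ t) (γ 0)] at htri2
  rw [dist_comm z (γ t)] at htri1
  constructor <;> [skip; skip] <;> rw [hd0p] at htri1 htri2 <;> linarith

end E


/-- under mIGC_ε, the foot-point projection restricted to
`O_ε ∩ {0 < δ < ε}` is surjective onto `∂Ω`. -/
theorem footpoint_projection_surjective
    [MetricSpace X] [ProperSpace X] [MeasurableSpace X] [BorelSpace X]
    (μ : Measure X)
    (hfin : ∀ s : Set X, Bornology.IsBounded s → μ s < ⊤)
    (hsupp : ∀ (x : X) (r : ℝ), 0 < r → 0 < μ (Metric.ball x r))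
    (hgeo : GeodesicSpace' X) (hnb : NonBranching X)
    (Ω : Set X) (hΩ : IsOpen Ω) (hfr : (frontier Ω).Nonempty)
    (ε : ℝ) (hε : 0 < ε)
    (hTnb : μ (Ω \ Tnb (signedDistFr Ω)) = 0)
    (hmigc : mIGC μ Ω ε) :
    ∀ z ∈ frontier Ω,
      ∃ x ∈ Oeps Ω ε ∩ {x | 0 < signedDistFr Ω x ∧ signedDistFr Ω x < ε} ∩
          Tnb (signedDistFr Ω), dist x z = signedDistFr Ω x := by
  intro z hz
  have hδz : signedDistFr Ω z = 0 := signedDistFr_frontier hz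
  have hlip := signedDistFr_lipschitz (Ω := Ω) hgeo
  -- extract the sequence of points at depth ε
  have hex : ∀ n : ℕ, ∃ p : X, signedDistFr Ω p = ε ∧ |dist p z - ε| ≤ 2 / (n + 1) :=
    fun n => exists_eps_point μ hsupp hgeo hΩ hε hmigc hz n
  choose P hP1 hP2 using hex
  have hball : ∀ n, P n ∈ Metric.closedBall z (ε + 2) := by
    intro n
    rw [Metric.mem_closedBall]
    have h1 := hP2 n
    rw [abs_le] at h1
    have h2 : (2:ℝ) / (n + 1) ≤ 2 := by
      rw [div_le_iff₀ (by positivity)]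
      nlinarith [Nat.cast_nonneg (α := ℝ) n]
    linarith [h1.2]
  obtain ⟨p, hpmem, φ, hφ, hlim⟩ := (isCompact_closedBall z (ε + 2)).tendsto_subseq hball
  have hlim' : Tendsto (fun k => P (φ k)) atTop (nhds p) := hlim
  have hPΩ : ∀ n, P n ∈ Ω := fun n => mem_of_signedDistFr_pos (by rw [hP1 n]; exact hε)
  have hPinf : ∀ n, infDist (P n) (frontier Ω) = ε := fun n => by
    rw [← signedDistFr_of_mem (hPΩ n)]; exact hP1 n
  have hinfp : infDist p (frontier Ω) = ε := by
    have h1 : Tendsto (fun k => infDist (P (φ k)) (frontier Ω)) atTop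
        (nhds (infDist p (frontier Ω))) :=
      ((continuous_infDist_pt (frontier Ω)).tendsto p).comp hlim'
    have h2 : (fun k => infDist (P (φ k)) (frontier Ω)) = fun _ => ε :=
      funext fun k => hPinf _
    rw [h2] at h1
    exact tendsto_nhds_unique h1 tendsto_const_nhds
  have hpcl : p ∈ closure Ω :=
    mem_closure_of_tendsto hlim' (Filter.Eventually.of_forall fun k => hPΩ _)
  have hpΩ : p ∈ Ω := by
    by_contra hno
    have hpf : p ∈ frontier Ω := by rw [hΩ.frontier_eq]; exact ⟨hpcl, hno⟩
    rw [infDist_zero_of_mem hpf] at hinfp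
    linarith
  have hδp : signedDistFr Ω p = ε := by rw [signedDistFr_of_mem hpΩ]; exact hinfp
  have hdpz : dist p z = ε := by
    have h1 : Tendsto (fun k => dist (P (φ k)) z) atTop (nhds (dist p z)) :=
      hlim'.dist tendsto_const_nhds
    have h2 : Tendsto (fun k => dist (P (φ k)) z) atTop (nhds ε) := by
      rw [tendsto_iff_dist_tendsto_zero]
      apply squeeze_zero (fun k => dist_nonneg) (g := fun k : ℕ => 2 / (k + 1))
      · intro k
        have h3 := hP2 (φ k)
        have h4 : (2:ℝ) / (φ k + 1) ≤ 2 / (k + 1) := by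
          gcongr
          exact_mod_cast hφ.le_apply
        calc dist (dist (P (φ k)) z) ε = |dist (P (φ k)) z - ε| := Real.dist_eq _ _
        _ ≤ 2 / (φ k + 1) := h3
        _ ≤ 2 / (k + 1) := h4
      · have h6 := tendsto_one_div_add_atTop_nhds_zero_nat.const_mul (2:ℝ)
        simpa [mul_one_div, div_eq_mul_inv] using h6
    exact tendsto_nhds_unique h1 h2
  -- geodesic from z to p
  obtain ⟨σ, hσ, hσ0, hσ1⟩ := hgeo z p
  have hdσ : dist (σ 0) (σ 1) = ε := by rw [hσ0, hσ1, dist_comm]; exact hdpz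
  have hσfr : σ 0 ∈ frontier Ω := by rw [hσ0]; exact hz
  have hσ1δ : signedDistFr Ω (σ 1) = dist (σ 0) (σ 1) := by rw [hdσ, hσ1]; exact hδp
  have hσpos : 0 < dist (σ 0) (σ 1) := by rw [hdσ]; exact hε
  obtain ⟨hxΩ, hxδ⟩ := ray_lemma hgeo hΩ hσ hσfr hσ1δ hσpos
    (t := 1/2) ⟨by norm_num, by norm_num⟩
  set x := σ (1/2) with hxdef
  rw [hdσ] at hxδ
  have hdxz : dist x z = ε / 2 := by
    rw [hxdef, ← hσ0, hσ (1/2) ⟨by norm_num, by norm_num⟩ 0 ⟨le_refl 0, zero_le_one⟩, hdσ,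
      show ((1:ℝ)/2 - 0) = 1/2 by ring, abs_of_nonneg (by norm_num : (0:ℝ) ≤ 1/2)]
    ring
  have hdpx : dist p x = ε / 2 := by
    rw [hxdef, ← hσ1, hσ 1 ⟨zero_le_one, le_refl 1⟩ (1/2) ⟨by norm_num, by norm_num⟩, hdσ,
      show ((1:ℝ) - 1/2) = 1/2 by ring, abs_of_nonneg (by norm_num : (0:ℝ) ≤ 1/2)]
    ring
  have hΓpx : signedDistFr Ω p - signedDistFr Ω x = dist p x := by
    rw [hδp, hxδ, hdpx]; ring
  have hΓxz : signedDistFr Ω x - signedDistFr Ω z = dist x z := by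
    rw [hδz, hxδ, hdxz]; ring
  have hzx : z ≠ x := by
    intro h
    rw [h, dist_self] at hdxz
    linarith
  -- membership in Oeps
  have hOeps : x ∈ Oeps Ω ε := by
    exact ⟨hxΩ, σ, hσ, ⟨1/2, ⟨by norm_num, by norm_num⟩, rfl⟩, hσfr, hσ1δ, le_of_eq hdσ.symm⟩
  have hmid : 0 < signedDistFr Ω x ∧ signedDistFr Ω x < ε := by
    rw [hxδ]; constructor <;> linarith
  -- membership in Tu
  have hxTu : x ∈ Tu (signedDistFr Ω) := ⟨z, hzx, Or.inl hΓxz⟩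
  -- not in Aplus
  have hAplus : x ∉ Aplus (signedDistFr Ω) := by
    rintro ⟨-, y₁, y₂, hy₁, hy₂, hR⟩
    apply hR
    simp only [Gamma, Set.mem_setOf_eq] at hy₁ hy₂
    by_cases he1 : y₁ = x
    · subst he1
      exact Or.inl hy₂
    by_cases he2 : y₂ = x
    · subst he2
      exact Or.inr hy₁
    have hb1 : 0 < dist x y₁ := dist_pos.2 fun h => he1 h.symm
    have hb2 : 0 < dist x y₂ := dist_pos.2 fun h => he2 h.symm
    have hpx2 : 0 < dist p x := by rw [hdpx]; linarith
    have hbw1 : dist p y₁ = dist p x + dist x y₁ := by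
      have hup := dist_triangle p x y₁
      have hlo := hlip p y₁
      linarith
    have hbw2 : dist p y₂ = dist p x + dist x y₂ := by
      have hup := dist_triangle p x y₂
      have hlo := hlip p y₂
      linarith
    rcases le_total (dist x y₁) (dist x y₂) with h | h
    · left
      show signedDistFr Ω y₁ - signedDistFr Ω y₂ = dist y₁ y₂
      have := betw_lemma hgeo hnb hpx2 hb1 h hbw1 hbw2
      linarith
    · right
      show signedDistFr Ω y₂ - signedDistFr Ω y₁ = dist y₂ y₁
      have := betw_lemma hgeo hnb hpx2 hb2 h hbw2 hbw1
      linarith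
  -- not in Aminus
  have hAminus : x ∉ Aminus (signedDistFr Ω) := by
    rintro ⟨-, y₁, y₂, hy₁, hy₂, hR⟩
    apply hR
    simp only [Gamma, Set.mem_setOf_eq] at hy₁ hy₂
    by_cases he1 : y₁ = x
    · subst he1
      exact Or.inr hy₂
    by_cases he2 : y₂ = x
    · subst he2
      exact Or.inl hy₁
    have hb1 : 0 < dist x y₁ := dist_pos.2 fun h => he1 h.symm
    have hb2 : 0 < dist x y₂ := dist_pos.2 fun h => he2 h.symm
    have hzx2 : 0 < dist z x := by rw [dist_comm, hdxz]; linarith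
    have hbw1 : dist z y₁ = dist z x + dist x y₁ := by
      have hup := dist_triangle y₁ x z
      have hlo := hlip y₁ z
      rw [dist_comm z y₁, dist_comm z x, dist_comm x y₁]
      have e1 : dist y₁ x = dist x y₁ := dist_comm _ _
      rw [e1] at hy₁
      linarith [hy₁, hΓxz, dist_comm x y₁, dist_comm x z]
    have hbw2 : dist z y₂ = dist z x + dist x y₂ := by
      have hup := dist_triangle y₂ x z
      have hlo := hlip y₂ z
      rw [dist_comm z y₂, dist_comm z x, dist_comm x y₂]
      have e1 : dist y₂ x = dist x y₂ := dist_comm _ _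
      rw [e1] at hy₂
      linarith [hy₂, hΓxz, dist_comm x y₂, dist_comm x z]
    have e1 : dist y₁ x = dist x y₁ := dist_comm _ _
    have e2 : dist y₂ x = dist x y₂ := dist_comm _ _
    rw [e1] at hy₁
    rw [e2] at hy₂
    rcases le_total (dist x y₁) (dist x y₂) with h | h
    · right
      show signedDistFr Ω y₂ - signedDistFr Ω y₁ = dist y₂ y₁
      have hbb := betw_lemma hgeo hnb hzx2 hb1 h hbw1 hbw2
      rw [dist_comm y₂ y₁]
      linarith
    · left
      show signedDistFr Ω y₁ - signedDistFr Ω y₂ = dist y₁ y₂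
      have hbb := betw_lemma hgeo hnb hzx2 hb2 h hbw2 hbw1
      rw [dist_comm y₁ y₂]
      linarith
  have hxTnb : x ∈ Tnb (signedDistFr Ω) := ⟨hxTu, fun hm => hm.elim hAplus hAminus⟩
  refine ⟨x, ⟨⟨hOeps, hmid⟩, hxTnb⟩, ?_⟩
  rw [hdxz, hxδ]
  ring
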